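/- The function s(b) = (g(b))^(M-φ) · (1 - g(b))^φ · exp(-(4/3)·b) / B(M-φ+1, φ+1), where g(b) = 1/4 + (3/4)·exp(-(4/3)·b) and B is the Beta function, integrates over b ∈ (0, ∞) to the probability that a Beta(M-φ+1, φ+1) random variable exceeds 1/4; in particular its integral over (0, ∞) is at most 1. -/

import Mathlib

/-!
The branch-length transform `b ↦ jcG b` is a strictly decreasing bijection from `(0, ∞)` onto
`(1/4, 1)` with `|jcG' b| = exp (-(4/3) b)`, so the substitution `p = jcG b` turns the integral of
`s` into the integral of the Beta(M - φ + 1, φ + 1) density over `(1/4, 1)`, which is the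
probability of that interval under the Beta distribution and hence at most `1`.
-/

open MeasureTheory

noncomputable def jcG (b : ℝ) : ℝ := 1/4 + (3/4) * Real.exp (-(4/3) * b)

/-- The Beta function `B(a,b) = Γ(a)Γ(b)/Γ(a+b)`. -/
noncomputable def betaFun (a b : ℝ) : ℝ := Real.Gamma a * Real.Gamma b / Real.Gamma (a + b)

open Real Set ProbabilityTheory

theorem hasDerivAt_jcG (b : ℝ) : HasDerivAt jcG (-exp (-(4/3) * b)) b := by
  have h := (((hasDerivAt_id b).const_mul (-(4/3) : ℝ)).exp.const_mul (3/4 : ℝ)).const_add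
    (1/4 : ℝ)
  exact h.congr_deriv (by simp only [id]; ring)

theorem strictAnti_jcG : StrictAnti jcG := fun x y hxy => by
  have := exp_lt_exp.2 (by linarith : -(4/3) * y < -(4/3) * x)
  simp only [jcG]
  linarith

theorem jcG_image_Ioi_zero : jcG '' Ioi 0 = Ioo (1/4) 1 := by
  ext p
  constructor
  · rintro ⟨b, hb, rfl⟩
    have h0 : 0 < exp (-(4/3) * b) := exp_pos _
    have h1 : exp (-(4/3) * b) < 1 := exp_lt_one_iff.2 (by linarith [mem_Ioi.1 hb])
    constructor <;> simp only [jcG] <;> linarith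
  · rintro ⟨h1, h2⟩
    have hq : 0 < (4 * p - 1) / 3 := by linarith
    refine ⟨-(3/4) * log ((4 * p - 1) / 3), ?_, ?_⟩
    · have := log_neg hq (by linarith)
      simp only [mem_Ioi]
      linarith
    · simp only [jcG]
      rw [show -(4/3) * (-(3/4) * log ((4 * p - 1) / 3)) = log ((4 * p - 1) / 3) by ring,
        exp_log hq]
      ring

theorem integral_comp_jcG_mul_exp (f : ℝ → ℝ) :
    ∫ b in Ioi 0, f (jcG b) * exp (-(4/3) * b) = ∫ p in Ioo (1/4) 1, f p := by
  rw [← jcG_image_Ioi_zero, integral_image_eq_integral_abs_deriv_smul measurableSet_Ioi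
    (fun b _ => (hasDerivAt_jcG b).hasDerivWithinAt) strictAnti_jcG.injective.injOn]
  refine setIntegral_congr_fun measurableSet_Ioi fun b _ => ?_
  rw [smul_eq_mul, abs_neg, abs_of_pos (exp_pos _), mul_comm]

theorem betaFun_eq_beta : betaFun = beta := rfl

theorem setIntegral_eq_betaMeasure_real {α β : ℝ} {s : Set ℝ} (hs : MeasurableSet s)
    (hs01 : s ⊆ Ioo 0 1) (hα : 0 < α) (hβ : 0 < β) :
    ∫ p in s, p ^ (α - 1) * (1 - p) ^ (β - 1) / beta α β = (betaMeasure α β).real s := by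
  have hpdf : ∀ p ∈ s, betaPDF α β p =
      ENNReal.ofReal (p ^ (α - 1) * (1 - p) ^ (β - 1) / beta α β) := fun p hp => by
    rw [betaPDF_of_pos_lt_one (hs01 hp).1 (hs01 hp).2]
    ring_nf
  have hnonneg : ∀ p ∈ s, 0 ≤ p ^ (α - 1) * (1 - p) ^ (β - 1) / beta α β := fun p hp =>
    div_nonneg (mul_nonneg (rpow_nonneg (hs01 hp).1.le _)
      (rpow_nonneg (by linarith [(hs01 hp).2]) _)) (beta_pos hα hβ).le
  rw [measureReal_def, betaMeasure, withDensity_apply _ hs, setLIntegral_congr_fun hs hpdf,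
    integral_eq_lintegral_of_nonneg_ae (ae_restrict_of_forall_mem hs hnonneg) (by fun_prop)]

theorem jc_sampler_density_integral (M φ : ℝ) (hφ0 : 0 ≤ φ) (hφM : φ ≤ M) :
    (∫ b in Set.Ioi (0:ℝ),
        (jcG b) ^ (M - φ) * (1 - jcG b) ^ φ * Real.exp (-(4/3) * b) /
          betaFun (M - φ + 1) (φ + 1)) =
      (∫ p in Set.Ioo (1/4 : ℝ) 1,
        p ^ (M - φ) * (1 - p) ^ φ / betaFun (M - φ + 1) (φ + 1)) ∧
    (∫ b in Set.Ioi (0:ℝ),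
        (jcG b) ^ (M - φ) * (1 - jcG b) ^ φ * Real.exp (-(4/3) * b) /
          betaFun (M - φ + 1) (φ + 1)) ≤ 1 := by
  have hα : 0 < M - φ + 1 := by linarith
  have hβ : 0 < φ + 1 := by linarith
  have hchange := integral_comp_jcG_mul_exp
    fun p => p ^ (M - φ) * (1 - p) ^ φ / betaFun (M - φ + 1) (φ + 1)
  simp only [div_mul_eq_mul_div] at hchange
  have hprob : ∫ p in Ioo (1/4) 1, p ^ (M - φ) * (1 - p) ^ φ / betaFun (M - φ + 1) (φ + 1) =
      (betaMeasure (M - φ + 1) (φ + 1)).real (Ioo (1/4) 1) := by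
    simpa only [betaFun_eq_beta, add_sub_cancel_right] using
      setIntegral_eq_betaMeasure_real measurableSet_Ioo
        (Ioo_subset_Ioo_left (by norm_num : (0 : ℝ) ≤ 1/4)) hα hβ
  have := isProbabilityMeasureBeta hα hβ
  refine ⟨hchange, ?_⟩
  rw [hchange, hprob]
  exact measureReal_le_one
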